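/- Let d ≥ 1, 0 < m ≤ d, and σ(x) = |x|^m on Ω = ℝ^d. Then a_σ(s) = K_d s^{d/m} for s ≥ 0, its inverse is b_σ(s) = K_d^{−m/d} s^{m/d}, B_σ(s) = (d/(m+d)) K_d^{−m/d} s^{1+m/d}, and H_σ(μ) = (m/d) K_d^{−m/d} μ^{m/d − 1} for every μ > 0. Moreover, for every nonnegative f ∈ L¹(ℝ^d) ∩ L^∞(ℝ^d): ∫₀^{+∞} dt / H_σ(μ_f(t)) ≤ (d/m) K_d^{m/d} ‖f‖_{L^∞}^{m/d} ‖f‖_{L¹}^{1−m/d}. -/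

import Mathlib

open MeasureTheory Set Filter Metric
open scoped ENNReal NNReal

noncomputable section

/-- The distribution function `μ_q(t) = meas {x ∈ Ω : q x > t}` of a function `q` on `Ω`. -/
def distFun {d : ℕ} (Ω : Set (EuclideanSpace ℝ (Fin d))) (q : EuclideanSpace ℝ (Fin d) → ℝ)
    (t : ℝ) : ℝ≥0∞ :=
  volume {x | x ∈ Ω ∧ t < q x}

/-- The pseudo-inverse `q♯(s) = inf {t ≥ 0 : μ_q(t) ≤ s}` of the distribution function. -/
def pseudoInv {d : ℕ} (Ω : Set (EuclideanSpace ℝ (Fin d))) (q : EuclideanSpace ℝ (Fin d) → ℝ)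
    (s : ℝ≥0∞) : ℝ :=
  sInf {t : ℝ | 0 ≤ t ∧ distFun Ω q t ≤ s}

/-- The Schwarz rearrangement of `q` on `Ω`: `q*(x) = q♯(meas (B(0,|x|) ∩ Ω))`. -/
def schwarzRearr {d : ℕ} (Ω : Set (EuclideanSpace ℝ (Fin d))) (q : EuclideanSpace ℝ (Fin d) → ℝ)
    (x : EuclideanSpace ℝ (Fin d)) : ℝ :=
  pseudoInv Ω q (volume (Metric.ball (0 : EuclideanSpace ℝ (Fin d)) ‖x‖ ∩ Ω))

/-- The Jacobian `a_σ(e) = meas {x ∈ Ω : σ x < e}`, with extended-real argument. -/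
def aSig {d : ℕ} (Ω : Set (EuclideanSpace ℝ (Fin d))) (σ : EuclideanSpace ℝ (Fin d) → ℝ)
    (e : EReal) : ℝ≥0∞ :=
  volume {x | x ∈ Ω ∧ (σ x : EReal) < e}

/-- `e_max = sup {e : a_σ(e) < meas Ω}`. -/
def eMax {d : ℕ} (Ω : Set (EuclideanSpace ℝ (Fin d))) (σ : EuclideanSpace ℝ (Fin d) → ℝ) :
    EReal :=
  sSup {e : EReal | aSig Ω σ e < volume Ω}

/-- `e_min = ess inf σ` on `Ω`. -/
def eMin {d : ℕ} (Ω : Set (EuclideanSpace ℝ (Fin d))) (σ : EuclideanSpace ℝ (Fin d) → ℝ) :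
    EReal :=
  essInf (fun x => (σ x : EReal)) (volume.restrict Ω)

/-- The admissibility assumptions on `σ` from Definition 1. -/
structure SigAdmissible {d : ℕ} (Ω : Set (EuclideanSpace ℝ (Fin d)))
    (σ : EuclideanSpace ℝ (Fin d) → ℝ) : Prop where
  dim_pos : 1 ≤ d
  measurableSet_Ω : MeasurableSet Ω
  measurable_σ : Measurable σ
  exists_lt : ∃ e : ℝ, aSig Ω σ (e : EReal) < volume Ω
  eMin_lt_eMax : eMin Ω σ < eMax Ω σ
  levelSets : ∀ e : ℝ, (e : EReal) < eMax Ω σ → volume {x | x ∈ Ω ∧ σ x = e} = 0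
  tendsto_eMax :
    Tendsto (fun e : ℝ => aSig Ω σ (e : EReal))
      (comap (fun e : ℝ => (e : EReal)) (nhdsWithin (eMax Ω σ) (Iio (eMax Ω σ))))
      (nhds (volume Ω))

/-- The σ-rearrangement `q^{*σ}(x) = q♯(a_σ(σ x)) · 1_{σ x < e_max}`. -/
def sigRearr {d : ℕ} (Ω : Set (EuclideanSpace ℝ (Fin d))) (σ q : EuclideanSpace ℝ (Fin d) → ℝ)
    (x : EuclideanSpace ℝ (Fin d)) : ℝ :=
  if (σ x : EReal) < eMax Ω σ then pseudoInv Ω q (aSig Ω σ (σ x : EReal)) else 0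

end

noncomputable section

/-- The pseudo-inverse `b_σ(μ) = sup {t < e_max : a_σ(t) ≤ μ}` of `a_σ`
(equal to `⊥ = -∞` if the set is empty). -/
def bSig {d : ℕ} (Ω : Set (EuclideanSpace ℝ (Fin d))) (σ : EuclideanSpace ℝ (Fin d) → ℝ)
    (μ : ℝ≥0∞) : EReal :=
  sSup {t : EReal | t < eMax Ω σ ∧ aSig Ω σ t ≤ μ}

/-- `B_σ(μ) = ∫_{a_σ(σ(x)) < μ} σ(x) dx`, for a real argument `μ`. -/
def BSig {d : ℕ} (Ω : Set (EuclideanSpace ℝ (Fin d))) (σ : EuclideanSpace ℝ (Fin d) → ℝ)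
    (μ : ℝ) : ℝ :=
  ∫ x in {x | x ∈ Ω ∧ aSig Ω σ (σ x : EReal) < ENNReal.ofReal μ}, σ x

/-- Finiteness of `B_σ(μ)` for all `μ ∈ [0, meas Ω)`, expressed as integrability of `σ`
on the corresponding sublevel sets. -/
def BSigFinite {d : ℕ} (Ω : Set (EuclideanSpace ℝ (Fin d)))
    (σ : EuclideanSpace ℝ (Fin d) → ℝ) : Prop :=
  ∀ μ : ℝ, 0 ≤ μ → ENNReal.ofReal μ < volume Ω →
    MeasureTheory.IntegrableOn σ {x | x ∈ Ω ∧ aSig Ω σ (σ x : EReal) < ENNReal.ofReal μ}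

/-- `H_σ(μ) = inf_{0 < s ≤ μ} (B_σ(μ+s) + B_σ(μ-s) - 2B_σ(μ))/s²`. -/
def HSig {d : ℕ} (Ω : Set (EuclideanSpace ℝ (Fin d))) (σ : EuclideanSpace ℝ (Fin d) → ℝ)
    (μ : ℝ) : ℝ :=
  sInf ((fun s => (BSig Ω σ (μ + s) + BSig Ω σ (μ - s) - 2 * BSig Ω σ μ) / s ^ 2) '' Ioc 0 μ)

/-- `K(q*, σ) = 4 ∫₀^{‖q‖_∞} dt / H_σ(μ_q(t))` (the integrand vanishes for `t ≥ ‖q‖_∞`). -/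
def Kconst {d : ℕ} (Ω : Set (EuclideanSpace ℝ (Fin d))) (σ q : EuclideanSpace ℝ (Fin d) → ℝ) :
    ℝ≥0∞ :=
  4 * ∫⁻ t in Ioi (0 : ℝ), ENNReal.ofReal ((HSig Ω σ ((distFun Ω q t).toReal))⁻¹)

/-- `β_{f,g}(s) = meas {x ∈ Ω : f x ≤ s < g x}`. -/
def betaFun {d : ℕ} (Ω : Set (EuclideanSpace ℝ (Fin d))) (f g : EuclideanSpace ℝ (Fin d) → ℝ)
    (s : ℝ) : ℝ≥0∞ :=
  volume {x | x ∈ Ω ∧ f x ≤ s ∧ s < g x}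

end

/-- The volume `K_d` of the unit ball of `ℝ^d`. -/
noncomputable def unitBallVol (d : ℕ) : ℝ :=
  (volume (Metric.ball (0 : EuclideanSpace ℝ (Fin d)) 1)).toReal

/-! For `σ = |x|^m` the sublevel sets `{a_σ(σ x) < μ}` are balls, so `a_σ`, `b_σ` and `B_σ` follow
from the volume of balls and integration in polar coordinates; in particular `B_σ(μ) = c μ^p` with
`p = 1 + m/d ∈ (1, 2]`. As `(x^p)'' = p(p-1) x^(p-2)` is convex and decreasing, the second
difference quotients of `B_σ` at `μ` lie above `B_σ''(μ)` and tend to it as `s → 0⁺`, so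
`H_σ = B_σ''`. Then `1/H_σ(μ_f(t)) = C μ_f(t)^(1-m/d)` vanishes for `t > ‖f‖_∞`; integrating over
`(0, ‖f‖_∞]` the tangent-line bound of the concave power `w^(1-m/d)` at `w = ‖f‖₁/‖f‖_∞`,
with the layer-cake formula `∫ μ_f = ‖f‖₁`, gives the estimate. -/
open Topology

def secondDiff (φ : ℝ → ℝ) (μ s : ℝ) : ℝ :=
  φ (μ + s) + φ (μ - s) - 2 * φ μ

section SecondDiff

variable {φ φ' φ'' : ℝ → ℝ} {μ b A s : ℝ}

/-- `s ↦ secondDiff φ μ s - A s²` is even, and convex since its second derivative is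
`φ'' (μ + s) + φ'' (μ - s) - 2 A`; hence it is minimal at `s = 0`. -/
theorem mul_sq_le_secondDiff (hφ : ContinuousOn φ (Icc (μ - b) (μ + b)))
    (hφ' : ∀ x ∈ Ioo (μ - b) (μ + b), HasDerivAt φ (φ' x) x)
    (hφ'' : ∀ x ∈ Ioo (μ - b) (μ + b), HasDerivAt φ' (φ'' x) x)
    (hA : ∀ u ∈ Ioo (-b) b, 2 * A ≤ φ'' (μ + u) + φ'' (μ - u)) (hs : s ∈ Icc (-b) b) :
    A * s ^ 2 ≤ secondDiff φ μ s := by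
  set F : ℝ → ℝ := fun s => secondDiff φ μ s - A * s ^ 2
  have plus_mem : ∀ u ∈ Ioo (-b) b, μ + u ∈ Ioo (μ - b) (μ + b) :=
    fun u hu => ⟨by linarith [hu.1], by linarith [hu.2]⟩
  have minus_mem : ∀ u ∈ Ioo (-b) b, μ - u ∈ Ioo (μ - b) (μ + b) :=
    fun u hu => ⟨by linarith [hu.2], by linarith [hu.1]⟩
  have hconvex : ConvexOn ℝ (Icc (-b) b) F := by
    refine convexOn_of_hasDerivWithinAt2_nonneg (convex_Icc _ _)
      (f' := fun u => φ' (μ + u) - φ' (μ - u) - 2 * A * u)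
      (f'' := fun u => φ'' (μ + u) + φ'' (μ - u) - 2 * A) ?_ ?_ ?_ ?_
    · have hplus := hφ.comp (continuousOn_const.add continuousOn_id)
        fun u (hu : u ∈ Icc (-b) b) => (⟨by linarith [hu.1], by linarith [hu.2]⟩ :
          μ + u ∈ Icc (μ - b) (μ + b))
      have hminus := hφ.comp (continuousOn_const.sub continuousOn_id)
        fun u (hu : u ∈ Icc (-b) b) => (⟨by linarith [hu.2], by linarith [hu.1]⟩ :
          μ - u ∈ Icc (μ - b) (μ + b))
      exact ((hplus.add hminus).sub continuousOn_const).sub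
        (continuousOn_const.mul (continuousOn_pow 2))
    all_goals simp only [interior_Icc]
    · intro u hu
      have := ((((hφ' _ (plus_mem u hu)).comp_const_add μ u).add
        ((hφ' _ (minus_mem u hu)).comp_const_sub μ u)).sub_const (2 * φ μ)).sub
        ((hasDerivAt_pow 2 u).const_mul A)
      exact (this.congr_deriv (by simp; ring)).hasDerivWithinAt
    · intro u hu
      have := (((hφ'' _ (plus_mem u hu)).comp_const_add μ u).sub
        ((hφ'' _ (minus_mem u hu)).comp_const_sub μ u)).sub
        ((hasDerivAt_id u).const_mul (2 * A))
      exact (this.congr_deriv (by simp)).hasDerivWithinAt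
    · intro u hu
      linarith [hA u hu]
  have hFeven : F (-s) = F s := by simp only [F, secondDiff]; ring_nf
  have hmin : F 0 ≤ F s := by
    have h := hconvex.2 hs (⟨by linarith [hs.2], by linarith [hs.1]⟩ : -s ∈ Icc (-b) b)
      (by norm_num : (0 : ℝ) ≤ 1 / 2) (by norm_num : (0 : ℝ) ≤ 1 / 2) (by norm_num)
    rw [hFeven] at h
    simp only [smul_eq_mul] at h
    calc F 0 = F (1 / 2 * s + 1 / 2 * -s) := by ring_nf
      _ ≤ 1 / 2 * F s + 1 / 2 * F s := h
      _ = F s := by ring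
  have hF0 : F 0 = 0 := by simp only [F, secondDiff, add_zero, sub_zero]; ring
  simp only [F] at hmin hF0
  linarith

theorem secondDiff_le_mul_sq (hφ : ContinuousOn φ (Icc (μ - b) (μ + b)))
    (hφ' : ∀ x ∈ Ioo (μ - b) (μ + b), HasDerivAt φ (φ' x) x)
    (hφ'' : ∀ x ∈ Ioo (μ - b) (μ + b), HasDerivAt φ' (φ'' x) x)
    (hA : ∀ u ∈ Ioo (-b) b, φ'' (μ + u) + φ'' (μ - u) ≤ 2 * A) (hs : s ∈ Icc (-b) b) :
    secondDiff φ μ s ≤ A * s ^ 2 := by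
  have := mul_sq_le_secondDiff (φ := -φ) (φ' := -φ') (φ'' := -φ'') (A := -A) hφ.neg
    (fun x hx => (hφ' x hx).neg) (fun x hx => (hφ'' x hx).neg)
    (fun u hu => by simp only [Pi.neg_apply]; linarith [hA u hu]) hs
  simp only [secondDiff, Pi.neg_apply] at this ⊢
  linarith

end SecondDiff

section Rpow

variable {c p μ s : ℝ}

theorem two_mul_rpow_le_rpow_add_add_rpow_sub {q u : ℝ} (hq : q ≤ 0) (hu : |u| < μ) :
    2 * μ ^ q ≤ (μ + u) ^ q + (μ - u) ^ q := by
  have hplus : 0 < μ + u := by linarith [neg_abs_le u]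
  have hminus : 0 < μ - u := by linarith [le_abs_self u]
  have hμ : 0 < μ := (abs_nonneg u).trans_lt hu
  have hamgm := Real.geom_mean_le_arith_mean2_weighted (by norm_num : (0:ℝ) ≤ 1 / 2)
    (by norm_num : (0:ℝ) ≤ 1 / 2) (Real.rpow_nonneg hplus.le q) (Real.rpow_nonneg hminus.le q)
    (by norm_num)
  have hprod : μ ^ q ≤ ((μ + u) ^ q) ^ (1 / 2 : ℝ) * ((μ - u) ^ q) ^ (1 / 2 : ℝ) := by
    rw [← Real.rpow_mul hplus.le, ← Real.rpow_mul hminus.le, ← Real.mul_rpow hplus.le hminus.le,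
      show μ ^ q = (μ * μ) ^ (q * (1 / 2)) by
        rw [Real.mul_rpow hμ.le hμ.le, ← Real.rpow_add hμ]; ring_nf]
    exact Real.rpow_le_rpow_of_nonpos (by positivity) (by nlinarith [sq_nonneg u]) (by linarith)
  linarith

theorem hasDerivAt_const_mul_rpow (c : ℝ) {x : ℝ} (hx : 0 < x) (p : ℝ) :
    HasDerivAt (fun x => c * x ^ p) (c * p * x ^ (p - 1)) x := by
  simpa [mul_assoc] using (Real.hasDerivAt_rpow_const (p := p) (Or.inl hx.ne')).const_mul c

theorem hasDerivAt_const_mul_mul_rpow_sub_one (c : ℝ) {x : ℝ} (hx : 0 < x) (p : ℝ) :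
    HasDerivAt (fun x => c * p * x ^ (p - 1)) (c * p * (p - 1) * x ^ (p - 2)) x := by
  have := hasDerivAt_const_mul_rpow (c * p) hx (p - 1)
  rwa [show p - 1 - 1 = p - 2 by ring] at this

theorem mul_sq_le_secondDiff_rpow (hc : 0 ≤ c) (hp1 : 1 ≤ p) (hp2 : p ≤ 2)
    (hs : |s| ≤ μ) :
    c * p * (p - 1) * μ ^ (p - 2) * s ^ 2 ≤ secondDiff (fun x => c * x ^ p) μ s := by
  refine mul_sq_le_secondDiff (b := μ) (φ' := fun x => c * p * x ^ (p - 1))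
    (φ'' := fun x => c * p * (p - 1) * x ^ (p - 2)) ?_ ?_ ?_ ?_ (abs_le.1 hs)
  · exact (continuous_const.mul (Real.continuous_rpow_const (by linarith))).continuousOn
  · exact fun x hx => hasDerivAt_const_mul_rpow c (by linarith [hx.1]) p
  · exact fun x hx => hasDerivAt_const_mul_mul_rpow_sub_one c (by linarith [hx.1]) p
  · intro u hu
    have := two_mul_rpow_le_rpow_add_add_rpow_sub (μ := μ) (u := u) (by linarith : p - 2 ≤ 0)
      (abs_lt.2 hu)
    have hcp : 0 ≤ c * p * (p - 1) := by
      have : 0 ≤ p - 1 := by linarith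
      positivity
    nlinarith

theorem secondDiff_rpow_le_mul_sq (hc : 0 ≤ c) (hp1 : 1 ≤ p) (hp2 : p ≤ 2)
    (hs0 : 0 ≤ s) (hsμ : s < μ) :
    secondDiff (fun x => c * x ^ p) μ s ≤ c * p * (p - 1) * (μ - s) ^ (p - 2) * s ^ 2 := by
  refine secondDiff_le_mul_sq (b := s) (φ' := fun x => c * p * x ^ (p - 1))
    (φ'' := fun x => c * p * (p - 1) * x ^ (p - 2)) ?_ ?_ ?_ ?_ ⟨by linarith, le_rfl⟩
  · exact (continuous_const.mul (Real.continuous_rpow_const (by linarith))).continuousOn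
  · exact fun x hx => hasDerivAt_const_mul_rpow c (by linarith [hx.1]) p
  · exact fun x hx => hasDerivAt_const_mul_mul_rpow_sub_one c (by linarith [hx.1]) p
  · intro u hu
    have hcp : 0 ≤ c * p * (p - 1) := by
      have : 0 ≤ p - 1 := by linarith
      positivity
    have hplus : (μ + u) ^ (p - 2) ≤ (μ - s) ^ (p - 2) :=
      Real.rpow_le_rpow_of_nonpos (by linarith) (by linarith [hu.1]) (by linarith)
    have hminus : (μ - u) ^ (p - 2) ≤ (μ - s) ^ (p - 2) :=
      Real.rpow_le_rpow_of_nonpos (by linarith) (by linarith [hu.2]) (by linarith)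
    nlinarith

/-- The quotients approach the bound as `s → 0⁺`, squeezed by `secondDiff_rpow_le_mul_sq`. -/
theorem isGLB_secondDiff_rpow_div_sq (hc : 0 ≤ c) (hp1 : 1 ≤ p) (hp2 : p ≤ 2) (hμ : 0 < μ) :
    IsGLB ((fun s => secondDiff (fun x => c * x ^ p) μ s / s ^ 2) '' Ioc 0 μ)
      (c * p * (p - 1) * μ ^ (p - 2)) := by
  refine ⟨?_, fun L hL => ?_⟩
  · rintro _ ⟨s, hs, rfl⟩
    rw [le_div_iff₀ (by positivity [hs.1])]
    exact mul_sq_le_secondDiff_rpow hc hp1 hp2 (by rw [abs_of_pos hs.1]; exact hs.2)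
  · have hlim : Tendsto (fun s => c * p * (p - 1) * (μ - s) ^ (p - 2)) (𝓝[>] 0)
        (𝓝 (c * p * (p - 1) * μ ^ (p - 2))) := by
      have : ContinuousAt (fun s => c * p * (p - 1) * (μ - s) ^ (p - 2)) 0 :=
        continuousAt_const.mul ((continuousAt_const.sub continuousAt_id).rpow_const
          (Or.inl (by simpa using hμ.ne')))
      simpa using this.tendsto.mono_left nhdsWithin_le_nhds
    refine ge_of_tendsto hlim ?_
    filter_upwards [Ioo_mem_nhdsGT hμ] with s hs
    calc L ≤ secondDiff (fun x => c * x ^ p) μ s / s ^ 2 := hL ⟨s, ⟨hs.1, hs.2.le⟩, rfl⟩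
      _ ≤ c * p * (p - 1) * (μ - s) ^ (p - 2) := by
        rw [div_le_iff₀ (by positivity [hs.1])]
        exact secondDiff_rpow_le_mul_sq hc hp1 hp2 hs.1.le hs.2

end Rpow

/-- The right side is the tangent line at `l` of the concave function `w ↦ w ^ θ`. -/
theorem rpow_le_tangent {θ w l : ℝ} (hθ0 : 0 ≤ θ) (hθ1 : θ ≤ 1) (hw : 0 ≤ w) (hl : 0 < l) :
    w ^ θ ≤ θ * l ^ (θ - 1) * w + (1 - θ) * l ^ θ := by
  have hamgm := Real.geom_mean_le_arith_mean2_weighted hθ0 (sub_nonneg.2 hθ1) hw hl.le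
    (add_sub_cancel θ 1)
  have hlθ : 0 < l ^ (1 - θ) := Real.rpow_pos_of_pos hl _
  rw [← le_div_iff₀ hlθ] at hamgm
  refine hamgm.trans_eq ?_
  rw [add_div, Real.rpow_sub hl, Real.rpow_sub hl, Real.rpow_one]
  field_simp

/-- Integrate `rpow_le_tangent` at `l = I / T`. -/
theorem lintegral_ofReal_toReal_rpow_le {α : Type*} [MeasurableSpace α] {ν : Measure α}
    {g : α → ℝ≥0∞} (hg : AEMeasurable g ν) {θ T I : ℝ} (hθ0 : 0 ≤ θ) (hθ1 : θ ≤ 1)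
    (hT : 0 < T) (hI : 0 < I) (hνT : ν univ ≤ ENNReal.ofReal T)
    (hgI : ∫⁻ x, g x ∂ν ≤ ENNReal.ofReal I) :
    ∫⁻ x, ENNReal.ofReal ((g x).toReal ^ θ) ∂ν ≤ ENNReal.ofReal (T ^ (1 - θ) * I ^ θ) := by
  set l := I / T
  have hl : 0 < l := div_pos hI hT
  set a := θ * l ^ (θ - 1)
  set b := (1 - θ) * l ^ θ
  have ha : 0 ≤ a := by positivity
  have hb : 0 ≤ b := mul_nonneg (sub_nonneg.2 hθ1) (by positivity)
  calc ∫⁻ x, ENNReal.ofReal ((g x).toReal ^ θ) ∂ν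
      ≤ ∫⁻ x, ENNReal.ofReal a * g x + ENNReal.ofReal b ∂ν := by
        refine lintegral_mono fun x => ?_
        calc ENNReal.ofReal ((g x).toReal ^ θ)
            ≤ ENNReal.ofReal (a * (g x).toReal + b) :=
              ENNReal.ofReal_le_ofReal (rpow_le_tangent hθ0 hθ1 ENNReal.toReal_nonneg hl)
          _ ≤ ENNReal.ofReal a * g x + ENNReal.ofReal b := by
              rw [ENNReal.ofReal_add (by positivity) hb, ENNReal.ofReal_mul ha]
              gcongr
              exact ENNReal.ofReal_toReal_le
    _ = ENNReal.ofReal a * ∫⁻ x, g x ∂ν + ENNReal.ofReal b * ν univ := by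
        rw [lintegral_add_right' _ aemeasurable_const, lintegral_const_mul'' _ hg,
          lintegral_const]
    _ ≤ ENNReal.ofReal a * ENNReal.ofReal I + ENNReal.ofReal b * ENNReal.ofReal T := by
        gcongr
    _ = ENNReal.ofReal (T ^ (1 - θ) * I ^ θ) := by
        rw [← ENNReal.ofReal_mul ha, ← ENNReal.ofReal_mul hb,
          ← ENNReal.ofReal_add (by positivity) (by positivity)]
        congr 1
        have hIl : I = l * T := (div_mul_cancel₀ I hT.ne').symm
        calc a * I + b * T = l ^ θ * T := by
              simp only [a, b]
              rw [hIl, Real.rpow_sub hl, Real.rpow_one]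
              field_simp
              ring
          _ = T ^ (1 - θ) * I ^ θ := by
              rw [Real.div_rpow hI.le hT.le, Real.rpow_sub hT, Real.rpow_one]
              have := Real.rpow_pos_of_pos hT θ
              field_simp

theorem ae_le_toReal_eLpNorm_top {α : Type*} [MeasurableSpace α] {μ : Measure α} {f : α → ℝ}
    (hf : MemLp f ⊤ μ) : ∀ᵐ x ∂μ, f x ≤ (eLpNorm f ⊤ μ).toReal := by
  filter_upwards [eLpNorm_exponent_top (f := f) (μ := μ) ▸ ae_le_eLpNormEssSup] with x hx
  calc f x ≤ ‖f x‖ := Real.le_norm_self _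
    _ = (‖f x‖ₑ).toReal := by simp
    _ ≤ (eLpNorm f ⊤ μ).toReal := ENNReal.toReal_mono hf.2.ne hx

theorem integral_norm_rpow_ball {E : Type*} [NormedAddCommGroup E] [NormedSpace ℝ E]
    [MeasurableSpace E] [BorelSpace E] [FiniteDimensional ℝ E] [Nontrivial E]
    (μ : Measure E) [μ.IsAddHaarMeasure] {m R : ℝ} (hm : -(Module.finrank ℝ E : ℝ) < m)
    (hR : 0 ≤ R) :
    ∫ x in ball (0 : E) R, ‖x‖ ^ m ∂μ = Module.finrank ℝ E * μ.real (ball 0 1)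
      * (R ^ (Module.finrank ℝ E + m) / (Module.finrank ℝ E + m)) := by
  set n := Module.finrank ℝ E
  have hn : 1 ≤ n := Module.finrank_pos
  have hball : ∫ x in ball (0 : E) R, ‖x‖ ^ m ∂μ = ∫ x, (Iio R).indicator (· ^ m) ‖x‖ ∂μ := by
    rw [← integral_indicator measurableSet_ball]
    refine integral_congr_ae (ae_of_all _ fun x => ?_)
    simp only [indicator, mem_ball, dist_zero_right, mem_Iio]
  have hradial : ∫ y in Ioi (0 : ℝ), y ^ (n - 1) • (Iio R).indicator (· ^ m) y
      = ∫ y in (0 : ℝ)..R, y ^ ((n : ℝ) - 1 + m) := by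
    have : (fun y : ℝ => y ^ (n - 1) • (Iio R).indicator (· ^ m) y)
        = (Iio R).indicator (fun y => y ^ (n - 1) * y ^ m) :=
      funext fun y => (indicator_mul_right _ (fun y : ℝ => y ^ (n - 1)) _).symm
    rw [this]
    rw [integral_indicator measurableSet_Iio, Measure.restrict_restrict measurableSet_Iio,
      Iio_inter_Ioi, intervalIntegral.integral_of_le hR, integral_Ioc_eq_integral_Ioo]
    refine setIntegral_congr_fun measurableSet_Ioo fun y hy => ?_
    rw [← Real.rpow_natCast, ← Real.rpow_add hy.1, Nat.cast_sub hn, Nat.cast_one]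
  rw [hball, integral_fun_norm_addHaar μ, hradial, integral_rpow (Or.inl (by linarith)),
    nsmul_eq_mul, smul_eq_mul, show (n : ℝ) - 1 + m + 1 = n + m by ring,
    Real.zero_rpow (by linarith), sub_zero, mul_assoc]

section

variable {d : ℕ} {Ω : Set (EuclideanSpace ℝ (Fin d))} {f : EuclideanSpace ℝ (Fin d) → ℝ}

theorem aSig_mono {σ : EuclideanSpace ℝ (Fin d) → ℝ} : Monotone (aSig Ω σ) :=
  fun _ _ h => measure_mono fun _ hx => ⟨hx.1, hx.2.trans_le h⟩

theorem HSig_zero {σ : EuclideanSpace ℝ (Fin d) → ℝ} : HSig Ω σ 0 = 0 := by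
  simp [HSig]

theorem distFun_antitone : Antitone (distFun Ω f) :=
  fun _ _ h => measure_mono fun _ hx => ⟨hx.1, h.trans_lt hx.2⟩

theorem distFun_eq_zero_of_ae_le {T t : ℝ} (hf : ∀ᵐ x, f x ≤ T) (ht : T ≤ t) :
    distFun Ω f t = 0 :=
  measure_mono_null (fun _ hx => not_le.2 (ht.trans_lt hx.2)) (ae_iff.1 hf)

theorem lintegral_distFun_univ (hf0 : ∀ x, 0 ≤ f x) (hfi : Integrable f) :
    ∫⁻ t in Ioi 0, distFun univ f t = ENNReal.ofReal (∫ x, f x) := by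
  simp only [distFun, mem_univ, true_and]
  rw [ofReal_integral_eq_lintegral_ofReal hfi (ae_of_all _ hf0),
    lintegral_eq_lintegral_meas_lt volume (ae_of_all _ hf0) hfi.aemeasurable]

end

section PowerWeight

variable {d : ℕ} [NeZero d] {m : ℝ}

local notation "E" => EuclideanSpace ℝ (Fin d)
local notation "K" => unitBallVol d

theorem unitBallVol_pos (d : ℕ) : 0 < unitBallVol d :=
  ENNReal.toReal_pos (measure_ball_pos volume _ one_pos).ne' measure_ball_lt_top.ne

theorem volume_ball_eq_unitBallVol_mul {r : ℝ} (hr : 0 ≤ r) :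
    volume (ball (0 : E) r) = ENNReal.ofReal (K * r ^ (d : ℝ)) := by
  rw [Measure.addHaar_ball _ _ hr, finrank_euclideanSpace_fin, Real.rpow_natCast, unitBallVol,
    ENNReal.ofReal_mul ENNReal.toReal_nonneg, ENNReal.ofReal_toReal measure_ball_lt_top.ne,
    mul_comm]

theorem aSig_univ_norm_rpow (hm : 0 < m) {s : ℝ} (hs : 0 ≤ s) :
    aSig univ (fun x : E => ‖x‖ ^ m) (s : EReal) = ENNReal.ofReal (K * s ^ ((d : ℝ) / m)) := by
  have hset : {x : E | x ∈ univ ∧ ((‖x‖ ^ m : ℝ) : EReal) < s} = ball 0 (s ^ m⁻¹) := by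
    ext x
    simp [Real.lt_rpow_inv_iff_of_pos (norm_nonneg x) hs hm]
  rw [aSig, hset, volume_ball_eq_unitBallVol_mul (by positivity), ← Real.rpow_mul hs,
    inv_mul_eq_div]

theorem aSig_univ_norm_rpow_of_nonpos (hm : 0 < m) {t : ℝ} (ht : t ≤ 0) :
    aSig univ (fun x : E => ‖x‖ ^ m) (t : EReal) = 0 := by
  refine le_antisymm ?_ zero_le
  calc aSig univ (fun x : E => ‖x‖ ^ m) (t : EReal)
        ≤ aSig univ (fun x : E => ‖x‖ ^ m) ((0 : ℝ) : EReal) :=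
        aSig_mono (EReal.coe_le_coe_iff.2 ht)
    _ = 0 := by
        rw [aSig_univ_norm_rpow hm le_rfl,
          Real.zero_rpow (div_pos (Nat.cast_pos.2 (NeZero.pos d)) hm).ne', mul_zero,
          ENNReal.ofReal_zero]

theorem eMax_univ_norm_rpow (hm : 0 < m) : eMax univ (fun x : E => ‖x‖ ^ m) = ⊤ := by
  refine sSup_eq_top.2 fun b hb => ?_
  obtain ⟨t, hbt, -⟩ := EReal.exists_between_coe_real hb
  refine ⟨t, ?_, hbt⟩
  calc aSig univ (fun x : E => ‖x‖ ^ m) (t : EReal)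
        ≤ aSig univ (fun x : E => ‖x‖ ^ m) ((max t 0 : ℝ) : EReal) :=
        aSig_mono (EReal.coe_le_coe_iff.2 (le_max_left _ _))
    _ < volume univ := by
        rw [aSig_univ_norm_rpow hm (le_max_right _ _), measure_univ_of_isAddLeftInvariant]
        exact ENNReal.ofReal_lt_top

theorem bSig_univ_norm_rpow (hm : 0 < m) {s : ℝ} (hs : 0 ≤ s) :
    bSig univ (fun x : E => ‖x‖ ^ m) (ENNReal.ofReal s)
      = ((K ^ (-(m / d)) * s ^ (m / d) : ℝ) : EReal) := by
  have hK := unitBallVol_pos d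
  have hdm : 0 < (d : ℝ) / m := div_pos (Nat.cast_pos.2 (NeZero.pos d)) hm
  have hb : K ^ (-(m / d)) * s ^ (m / d) = (s / K) ^ ((d : ℝ) / m)⁻¹ := by
    rw [inv_div, Real.div_rpow hs hK.le, Real.rpow_neg hK.le, inv_mul_eq_div]
  have hset : {t : EReal | t < eMax univ (fun x : E => ‖x‖ ^ m)
      ∧ aSig univ (fun x : E => ‖x‖ ^ m) t ≤ ENNReal.ofReal s}
      = Iic ((K ^ (-(m / d)) * s ^ (m / d) : ℝ) : EReal) := by
    rw [eMax_univ_norm_rpow hm]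
    ext t
    induction t using EReal.rec with
    | bot => simp [aSig]
    | top => simp only [mem_ofPred_eq, lt_self_iff_false, false_and, mem_Iic, top_le_iff,
        EReal.coe_ne_top]
    | coe t =>
      simp only [mem_ofPred_eq, mem_Iic, EReal.coe_lt_top, true_and, EReal.coe_le_coe_iff]
      rcases le_or_gt t 0 with ht | ht
      · simp only [aSig_univ_norm_rpow_of_nonpos hm ht, zero_le, true_iff]
        exact ht.trans (by positivity)
      · rw [aSig_univ_norm_rpow hm ht.le, ENNReal.ofReal_le_ofReal_iff hs, hb,
          Real.le_rpow_inv_iff_of_pos ht.le (by positivity) hdm, le_div_iff₀ hK, mul_comm]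
  rw [bSig, hset, csSup_Iic]

theorem BSig_univ_norm_rpow (hm : 0 < m) {s : ℝ} (hs : 0 ≤ s) :
    BSig univ (fun x : E => ‖x‖ ^ m) s
      = (d / (m + d)) * K ^ (-(m / d)) * s ^ (1 + m / d) := by
  have hK := unitBallVol_pos d
  have hd' : (0 : ℝ) < d := Nat.cast_pos.2 (NeZero.pos d)
  have haSig : ∀ x : E, aSig univ (fun x : E => ‖x‖ ^ m) ((‖x‖ ^ m : ℝ) : EReal)
      = ENNReal.ofReal (K * ‖x‖ ^ (d : ℝ)) := fun x => by
    rw [aSig_univ_norm_rpow hm (by positivity), ← Real.rpow_mul (norm_nonneg x),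
      mul_div_cancel₀ _ hm.ne']
  have hset : {x : E | x ∈ univ ∧ aSig univ (fun x : E => ‖x‖ ^ m) ((‖x‖ ^ m : ℝ) : EReal)
      < ENNReal.ofReal s} = ball 0 ((s / K) ^ (d : ℝ)⁻¹) := by
    ext x
    simp only [mem_ofPred_eq, mem_univ, true_and, haSig x, mem_ball, dist_zero_right]
    rw [ENNReal.ofReal_lt_ofReal_iff_of_nonneg (by positivity),
      Real.lt_rpow_inv_iff_of_pos (norm_nonneg x) (by positivity) hd', lt_div_iff₀ hK, mul_comm]
  rw [BSig, hset, integral_norm_rpow_ball volume (by rw [finrank_euclideanSpace_fin]; linarith)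
    (by positivity), finrank_euclideanSpace_fin, ← Real.rpow_mul (by positivity),
    Real.div_rpow hs hK.le, measureReal_def]
  change _ * K * _ = _
  rw [show (d : ℝ)⁻¹ * (d + m) = 1 + m / d by field_simp, Real.rpow_add hK, Real.rpow_one,
    Real.rpow_neg hK.le]
  have := Real.rpow_pos_of_pos hK (m / d)
  field_simp
  ring

theorem HSig_univ_norm_rpow (hm : 0 < m) (hmd : m ≤ d) {μ : ℝ} (hμ : 0 < μ) :
    HSig univ (fun x : E => ‖x‖ ^ m) μ = (m / d) * K ^ (-(m / d)) * μ ^ (m / d - 1) := by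
  have hd' : (0 : ℝ) < d := Nat.cast_pos.2 (NeZero.pos d)
  set c : ℝ := d / (m + d) * K ^ (-(m / d))
  have hB : ∀ s, 0 ≤ s → BSig univ (fun x : E => ‖x‖ ^ m) s = c * s ^ (1 + m / d) :=
    fun s hs => BSig_univ_norm_rpow hm hs
  have himage : (fun s => (BSig univ (fun x : E => ‖x‖ ^ m) (μ + s)
      + BSig univ (fun x : E => ‖x‖ ^ m) (μ - s) - 2 * BSig univ (fun x : E => ‖x‖ ^ m) μ)
      / s ^ 2) '' Ioc 0 μ
      = (fun s => secondDiff (fun x => c * x ^ (1 + m / d)) μ s / s ^ 2) '' Ioc 0 μ := by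
    refine image_congr fun s hs => ?_
    rw [hB _ (by linarith [hs.1]), hB _ (by linarith [hs.2]), hB _ hμ.le, secondDiff]
  have hglb := isGLB_secondDiff_rpow_div_sq (c := c) (p := 1 + m / d)
    (by have := unitBallVol_pos d; positivity) (by have := div_pos hm hd'; linarith)
    (by have := (div_le_one hd').2 hmd; linarith) hμ
  rw [HSig, himage, hglb.csInf_eq ⟨_, mem_image_of_mem _ (right_mem_Ioc.2 hμ)⟩,
    show 1 + m / d - 2 = m / d - 1 by ring]
  have : m + d ≠ 0 := by linarith
  simp only [c]
  field_simp
  ring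

/-- For `w = 0` the left side is `0⁻¹ = 0`, since `HSig` is an infimum over `Ioc 0 0 = ∅`. -/
theorem inv_HSig_univ_norm_rpow_le (hm : 0 < m) (hmd : m ≤ d) {w : ℝ}
    (hw : 0 ≤ w) :
    (HSig univ (fun x : E => ‖x‖ ^ m) w)⁻¹ ≤ (d / m) * K ^ (m / d) * w ^ (1 - m / d) := by
  have hK := unitBallVol_pos d
  rcases hw.eq_or_lt with rfl | hw
  · rw [HSig_zero, inv_zero]
    positivity
  rw [HSig_univ_norm_rpow hm hmd hw, mul_inv, mul_inv, inv_div, ← Real.rpow_neg hK.le,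
    neg_neg, ← Real.rpow_neg hw.le, neg_sub]

theorem lintegral_inv_HSig_distFun_le_mul_setLIntegral (hm : 0 < m) (hmd : m ≤ d)
    {f : E → ℝ} (hfb : MemLp f ⊤ volume) :
    ∫⁻ t in Ioi 0, ENNReal.ofReal ((HSig univ (fun x : E => ‖x‖ ^ m) (distFun univ f t).toReal)⁻¹)
      ≤ ENNReal.ofReal ((d / m) * K ^ (m / d)) * ∫⁻ t in Ioc 0 (eLpNorm f ⊤ volume).toReal,
          ENNReal.ofReal ((distFun univ f t).toReal ^ (1 - m / d)) := by
  set T := (eLpNorm f ⊤ volume).toReal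
  set G : ℝ → ℝ≥0∞ := fun t =>
    ENNReal.ofReal ((d / m) * K ^ (m / d))
      * ENNReal.ofReal ((distFun univ f t).toReal ^ (1 - m / d))
  have hG : Measurable G := by
    have := (distFun_antitone (Ω := univ) (f := f)).measurable
    fun_prop
  have hpointwise : ∀ t ∈ Ioi (0 : ℝ),
      ENNReal.ofReal ((HSig univ (fun x : E => ‖x‖ ^ m) (distFun univ f t).toReal)⁻¹)
        ≤ (Ioc 0 T).indicator G t := by
    intro t ht
    by_cases htT : t ≤ T
    · rw [indicator_of_mem (show t ∈ Ioc 0 T from ⟨ht, htT⟩)]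
      dsimp only [G]
      rw [← ENNReal.ofReal_mul (by positivity [unitBallVol_pos d])]
      exact ENNReal.ofReal_le_ofReal
        (inv_HSig_univ_norm_rpow_le hm hmd ENNReal.toReal_nonneg)
    · simp [distFun_eq_zero_of_ae_le (ae_le_toReal_eLpNorm_top hfb) (not_le.1 htT).le, HSig_zero]
  calc _ ≤ ∫⁻ t in Ioi 0, (Ioc 0 T).indicator G t :=
        setLIntegral_mono (hG.indicator measurableSet_Ioc) hpointwise
    _ = ∫⁻ t in Ioc 0 T, G t := by
        rw [lintegral_indicator measurableSet_Ioc, Measure.restrict_restrict measurableSet_Ioc,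
          inter_eq_left.2 Ioc_subset_Ioi_self]
    _ = _ := lintegral_const_mul' _ _ ENNReal.ofReal_ne_top

theorem lintegral_inv_HSig_distFun_le (hm : 0 < m) (hmd : m ≤ d) {f : E → ℝ}
    (hf0 : ∀ x, 0 ≤ f x) (hfi : Integrable f) (hfb : MemLp f ⊤ volume) :
    ∫⁻ t in Ioi 0, ENNReal.ofReal ((HSig univ (fun x : E => ‖x‖ ^ m) (distFun univ f t).toReal)⁻¹)
      ≤ ENNReal.ofReal ((d / m) * K ^ (m / d) * (eLpNorm f ⊤ volume).toReal ^ (m / d)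
          * (∫ x, f x) ^ (1 - m / d)) := by
  refine (lintegral_inv_HSig_distFun_le_mul_setLIntegral hm hmd hfb).trans ?_
  set T := (eLpNorm f ⊤ volume).toReal with hTdef
  set I := ∫ x, f x
  rcases (show 0 ≤ T from ENNReal.toReal_nonneg).eq_or_lt with hT | hT
  · rw [← hT, Ioc_self, Measure.restrict_empty, lintegral_zero_measure, mul_zero]
    exact zero_le
  have hI : 0 < I := by
    refine (integral_nonneg hf0).lt_of_ne fun hI => hT.ne' ?_
    have hf : f =ᵐ[volume] 0 := (integral_eq_zero_iff_of_nonneg hf0 hfi).1 hI.symm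
    rw [hTdef, eLpNorm_congr_ae hf, eLpNorm_zero, ENNReal.toReal_zero]
  have hJensen := lintegral_ofReal_toReal_rpow_le (ν := volume.restrict (Ioc 0 T))
    distFun_antitone.measurable.aemeasurable (θ := 1 - m / d)
    (sub_nonneg.2 ((div_le_one (hm.trans_le hmd)).2 hmd))
    (by linarith [div_pos hm (hm.trans_le hmd)]) hT hI
    (by rw [Measure.restrict_apply_univ, Real.volume_Ioc, sub_zero])
    ((lintegral_mono_set Ioc_subset_Ioi_self).trans (lintegral_distFun_univ hf0 hfi).le)
  rw [sub_sub_cancel] at hJensen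
  calc _ ≤ ENNReal.ofReal ((d / m) * K ^ (m / d))
        * ENNReal.ofReal (T ^ (m / d) * I ^ (1 - m / d)) := by gcongr
    _ = _ := by
        rw [← ENNReal.ofReal_mul (by positivity [unitBallVol_pos d])]
        ring_nf

end PowerWeight

/-- explicit computation of `a_σ`, `b_σ`, `B_σ`, `H_σ` for
`σ(x) = |x|^m` on `ℝ^d`, and the resulting bound
`∫₀^∞ dt/H_σ(μ_f(t)) ≤ (d/m) K_d^{m/d} ‖f‖_∞^{m/d} ‖f‖₁^{1−m/d}`. -/
theorem power_weight_computation {d : ℕ} (hd : 1 ≤ d) (m : ℝ) (hm0 : 0 < m)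
    (hmd : m ≤ (d : ℝ)) :
    (∀ s : ℝ, 0 ≤ s →
      aSig Set.univ (fun x : EuclideanSpace ℝ (Fin d) => ‖x‖ ^ m) (s : EReal)
        = ENNReal.ofReal (unitBallVol d * s ^ ((d : ℝ) / m))) ∧
    (∀ s : ℝ, 0 ≤ s →
      bSig Set.univ (fun x : EuclideanSpace ℝ (Fin d) => ‖x‖ ^ m) (ENNReal.ofReal s)
        = ((unitBallVol d ^ (-(m / (d : ℝ))) * s ^ (m / (d : ℝ)) : ℝ) : EReal)) ∧
    (∀ s : ℝ, 0 ≤ s →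
      BSig Set.univ (fun x : EuclideanSpace ℝ (Fin d) => ‖x‖ ^ m) s
        = (d / (m + d)) * unitBallVol d ^ (-(m / (d : ℝ))) * s ^ (1 + m / (d : ℝ))) ∧
    (∀ μ : ℝ, 0 < μ →
      HSig Set.univ (fun x : EuclideanSpace ℝ (Fin d) => ‖x‖ ^ m) μ
        = (m / d) * unitBallVol d ^ (-(m / (d : ℝ))) * μ ^ (m / (d : ℝ) - 1)) ∧
    (∀ f : EuclideanSpace ℝ (Fin d) → ℝ, (∀ x, 0 ≤ f x) →
      MeasureTheory.Integrable f → MeasureTheory.MemLp f ⊤ volume →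
      (∫⁻ t in Ioi (0 : ℝ), ENNReal.ofReal
          ((HSig Set.univ (fun x : EuclideanSpace ℝ (Fin d) => ‖x‖ ^ m)
            ((distFun Set.univ f t).toReal))⁻¹))
        ≤ ENNReal.ofReal ((d / m) * unitBallVol d ^ (m / (d : ℝ))
            * ((MeasureTheory.eLpNorm f ⊤ volume).toReal) ^ (m / (d : ℝ))
            * (∫ x, f x) ^ (1 - m / (d : ℝ)))) := by
  have : NeZero d := ⟨by omega⟩
  exact ⟨fun _ hs => aSig_univ_norm_rpow hm0 hs,
    fun _ hs => bSig_univ_norm_rpow hm0 hs,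
    fun _ hs => BSig_univ_norm_rpow hm0 hs,
    fun _ hμ => HSig_univ_norm_rpow hm0 hmd hμ,
    fun _ hf0 hfi hfb => lintegral_inv_HSig_distFun_le hm0 hmd hf0 hfi hfb⟩
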